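/- arXiv:0807.4107 — 3 statements merged into one kernel-verified Lean document; each statement's English description precedes it below -/
import Mathlib

section
/- Let t, r, φ, z : ℝ → ℝ be a geodesic of Gödel's universe, and fix u₀ ∈ ℝ. Set A = P_{2,0}(u₀) and B = P_{0,1}(u₀). If A ≤ 0 and B ≥ 0, then t'(u) ≤ 0 for every u ∈ ℝ. -/
open Real

/-- A function is twice differentiable (everywhere on ℝ). -/
def TwiceDiff (f : ℝ → ℝ) : Prop :=
  Differentiable ℝ f ∧ Differentiable ℝ (deriv f)

/-- The four geodesic differential equations of Gödel's universe in
cylindrical coordinates. -/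
def GodelGeodesicEqns (t r φ z : ℝ → ℝ) : Prop :=
  ∀ u : ℝ,
    (deriv (deriv t) u + 4 * Real.tanh (r u) * deriv t u * deriv r u
      + 2 * Real.sqrt 2 * (Real.sinh (r u) ^ 3 / Real.cosh (r u)) * deriv φ u * deriv r u = 0)
    ∧ (deriv (deriv r) u
      + 2 * Real.sqrt 2 * Real.sinh (r u) * Real.cosh (r u) * deriv t u * deriv φ u
      + Real.sinh (r u) * Real.cosh (r u) * (2 * Real.cosh (r u) ^ 2 - 3) * (deriv φ u) ^ 2 = 0)
    ∧ (deriv (deriv φ) u * Real.sinh (r u) * Real.cosh (r u)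
      - 2 * Real.sqrt 2 * deriv t u * deriv r u + 2 * deriv φ u * deriv r u = 0)
    ∧ (deriv (deriv z) u = 0)

/-- The conserved momentum quantity `P_{ρ₁,ρ₂}` along a curve. -/
noncomputable def godelP (t r φ : ℝ → ℝ) (ρ₁ ρ₂ : ℝ) (u : ℝ) : ℝ :=
  (ρ₂ + ρ₁ * Real.cosh (r u) ^ 2 / 2) * deriv t u
    + ((ρ₁ * Real.cosh (r u) ^ 2 + 4 * ρ₂) * Real.sinh (r u) ^ 2 / (2 * Real.sqrt 2)) * deriv φ u

/-- The conserved quantity `C₁` along a curve. -/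
noncomputable def godelC1 (t r φ : ℝ → ℝ) (u : ℝ) : ℝ :=
  -(Real.sqrt 2) * Real.cos (φ u) * Real.sinh (2 * r u) * deriv t u
    + Real.sin (φ u) * deriv r u
    - Real.cos (φ u) * (Real.cosh (2 * r u) - 2) * Real.sinh (2 * r u) / 2 * deriv φ u

/-- The conserved quantity `C₂` along a curve. -/
noncomputable def godelC2 (t r φ : ℝ → ℝ) (u : ℝ) : ℝ :=
  Real.sqrt 2 * Real.sin (φ u) * Real.sinh (2 * r u) * deriv t u
    + Real.cos (φ u) * deriv r u
    + Real.sin (φ u) * (Real.cosh (2 * r u) - 2) * Real.sinh (2 * r u) / 2 * deriv φ u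

/-! Each `P_{ρ₁,ρ₂}` is a first integral of the geodesic equations: its derivative vanishes by the
`t`- and `φ`-equations together with `cosh² - sinh² = 1`. Eliminating `φ'` between `P_{2,0}` and
`P_{0,1}` gives `cosh(r)² t' = 2 P_{2,0} - cosh(r)² P_{0,1}`, so `cosh(r)² t' = 2A - cosh(r)² B ≤ 0`
along the whole curve. -/

lemma hasDerivAt_godelP {t r φ : ℝ → ℝ} {u : ℝ} (ht : DifferentiableAt ℝ (deriv t) u)
    (hr : DifferentiableAt ℝ r u) (hφ : DifferentiableAt ℝ (deriv φ) u) (ρ₁ ρ₂ : ℝ) :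
    HasDerivAt (godelP t r φ ρ₁ ρ₂)
      (ρ₁ * cosh (r u) * sinh (r u) * deriv r u * deriv t u
        + (ρ₂ + ρ₁ * cosh (r u) ^ 2 / 2) * deriv (deriv t) u
        + (ρ₁ * cosh (r u) ^ 2 + ρ₁ * sinh (r u) ^ 2 + 4 * ρ₂) * cosh (r u) * sinh (r u)
            * deriv r u / sqrt 2 * deriv φ u
        + (ρ₁ * cosh (r u) ^ 2 + 4 * ρ₂) * sinh (r u) ^ 2 / (2 * sqrt 2) * deriv (deriv φ) u) u := by
  have hcosh := hr.hasDerivAt.cosh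
  have hsinh := hr.hasDerivAt.sinh
  have h : HasDerivAt (godelP t r φ ρ₁ ρ₂) _ u :=
    ((((hcosh.pow 2).const_mul ρ₁).div_const 2).const_add ρ₂).mul ht.hasDerivAt
    |>.add (((((hcosh.pow 2).const_mul ρ₁).add_const (4 * ρ₂)).mul (hsinh.pow 2)).div_const
      (2 * sqrt 2) |>.mul hφ.hasDerivAt)
  convert h using 1
  simp only [Pi.pow_apply, Pi.mul_apply]
  field_simp
  ring

lemma godelP_hasDerivAt_zero {t r φ z : ℝ → ℝ} (ht : TwiceDiff t) (hr : TwiceDiff r)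
    (hφ : TwiceDiff φ) (hgeo : GodelGeodesicEqns t r φ z) (ρ₁ ρ₂ u : ℝ) :
    HasDerivAt (godelP t r φ ρ₁ ρ₂) 0 u := by
  convert hasDerivAt_godelP (ht.2 u) (hr.1 u) (hφ.2 u) ρ₁ ρ₂ using 1
  obtain ⟨eqn_t, -, eqn_φ, -⟩ := hgeo u
  have hc : cosh (r u) ≠ 0 := (cosh_pos _).ne'
  have h2 : sqrt 2 ^ 2 = 2 := sq_sqrt zero_le_two
  have hcs := cosh_sq_sub_sinh_sq (r u)
  rw [tanh_eq_sinh_div_cosh] at eqn_t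
  field_simp at eqn_t
  symm
  -- the equations determine `cosh · t''` and `sinh · cosh · φ''`, hence the factor `cosh`
  suffices h : cosh (r u) * (2 * sqrt 2 * _) = 0 by simpa [hc] using h
  field_simp
  linear_combination sqrt 2 * (2 * ρ₂ + cosh (r u) ^ 2 * ρ₁) * eqn_t
    + sinh (r u) * (cosh (r u) ^ 2 * ρ₁ + 4 * ρ₂) * eqn_φ
    - 2 * (2 * ρ₂ + cosh (r u) ^ 2 * ρ₁) * sinh (r u) ^ 3 * deriv φ u * deriv r u * h2
    + (2 * ρ₁ * cosh (r u) ^ 2 + 8 * ρ₂) * sinh (r u) * deriv φ u * deriv r u * hcs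

lemma godelP_eq_of_geodesic {t r φ z : ℝ → ℝ} (ht : TwiceDiff t) (hr : TwiceDiff r)
    (hφ : TwiceDiff φ) (hgeo : GodelGeodesicEqns t r φ z) (ρ₁ ρ₂ u v : ℝ) :
    godelP t r φ ρ₁ ρ₂ u = godelP t r φ ρ₁ ρ₂ v :=
  have h := godelP_hasDerivAt_zero ht hr hφ hgeo ρ₁ ρ₂
  is_const_of_deriv_eq_zero (fun x => (h x).differentiableAt) (fun x => (h x).deriv) u v

lemma cosh_sq_mul_deriv_eq_godelP (t r φ : ℝ → ℝ) (u : ℝ) :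
    cosh (r u) ^ 2 * deriv t u = 2 * godelP t r φ 2 0 u - cosh (r u) ^ 2 * godelP t r φ 0 1 u := by
  unfold godelP
  ring

theorem godel_tdot_nonpos_general (t r φ z : ℝ → ℝ)
    (ht : TwiceDiff t) (hr : TwiceDiff r) (hφ : TwiceDiff φ)
    (hgeo : GodelGeodesicEqns t r φ z)
    (u₀ : ℝ) (A B : ℝ)
    (hA : A = godelP t r φ 2 0 u₀) (hB : B = godelP t r φ 0 1 u₀)
    (hA0 : A ≤ 0) (hB0 : 0 ≤ B) :
    ∀ u : ℝ, deriv t u ≤ 0 := by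
  intro u
  have h := cosh_sq_mul_deriv_eq_godelP t r φ u
  rw [godelP_eq_of_geodesic ht hr hφ hgeo 2 0 u u₀, godelP_eq_of_geodesic ht hr hφ hgeo 0 1 u u₀,
    ← hA, ← hB] at h
  have hB' := mul_nonneg (sq_nonneg (cosh (r u))) hB0
  exact nonpos_of_mul_nonpos_right (a := cosh (r u) ^ 2) (by linarith) (by positivity)

/-- If `A = P_{2,0}(u₀) ≤ 0` and `B = P_{0,1}(u₀) ≥ 0`, then `t' ≤ 0`
everywhere along the geodesic. -/
theorem godel_tdot_nonpos (t r φ z : ℝ → ℝ)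
    (ht : TwiceDiff t) (hr : TwiceDiff r) (hφ : TwiceDiff φ) (hz : TwiceDiff z)
    (hrpos : ∀ u, 0 < r u)
    (hgeo : GodelGeodesicEqns t r φ z)
    (u₀ : ℝ) (A B : ℝ)
    (hA : A = godelP t r φ 2 0 u₀) (hB : B = godelP t r φ 0 1 u₀)
    (hA0 : A ≤ 0) (hB0 : 0 ≤ B) :
    ∀ u : ℝ, deriv t u ≤ 0 :=
  godel_tdot_nonpos_general t r φ z ht hr hφ hgeo u₀ A B hA hB hA0 hB0
end

section
/- Let t, r, φ, z : ℝ → ℝ be a geodesic of Gödel's universe, fix u₀ ∈ ℝ, and set c₁ = C₁(u₀), c₂ = C₂(u₀), A = P_{2,0}(u₀). Then the angular velocity is bounded: |φ'(u)| ≤ 2√(c₁² + c₂²)/sinh(2r(u)) + |A|·2√2/cosh(r(u))² for every u ∈ ℝ. -/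
/-!
`P_{2,0}`, `C₁` and `C₂` are first integrals of the geodesic equations: the derivative of each is
a linear combination of the equations. For `C₂` this follows from `C₁`, since `C₂` is `C₁` of the
curve rotated by a quarter turn and rotations `φ ↦ φ + c` map geodesics to geodesics.
Pointwise, `sinh r cosh² r · φ' = 2√2 sinh r · P_{2,0} - cosh r · (C₂ sin φ - C₁ cos φ)`, and
`|C₂ sin φ - C₁ cos φ| ≤ √(C₁² + C₂²)`; dividing by `sinh r cosh² r > 0` gives the bound.
-/

open Real

section Geodesic

variable {t r φ z : ℝ → ℝ}

lemma GodelGeodesicEqns.cosh_mul_eqn_t (hgeo : GodelGeodesicEqns t r φ z) (u : ℝ) :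
    cosh (r u) * deriv (deriv t) u + 4 * sinh (r u) * deriv t u * deriv r u
      + 2 * √2 * sinh (r u) ^ 3 * deriv φ u * deriv r u = 0 := by
  have h := (hgeo u).1
  rw [tanh_eq_sinh_div_cosh] at h
  have : cosh (r u) ≠ 0 := (cosh_pos _).ne'
  field_simp at h
  linear_combination h

lemma GodelGeodesicEqns.add_const_angle (hgeo : GodelGeodesicEqns t r φ z) (c : ℝ) :
    GodelGeodesicEqns t r (fun u => φ u + c) z := by
  simpa only [GodelGeodesicEqns, deriv_add_const'] using hgeo

lemma TwiceDiff.add_const {f : ℝ → ℝ} (hf : TwiceDiff f) (c : ℝ) :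
    TwiceDiff (fun u => f u + c) := by
  simpa only [TwiceDiff, deriv_add_const', differentiable_add_const_iff] using hf

end Geodesic

section ConservedQuantities

variable {t r φ : ℝ → ℝ}

lemma godelP_two_zero_eq (u : ℝ) :
    godelP t r φ 2 0 u = cosh (r u) ^ 2 * deriv t u
      + √2 / 2 * (cosh (r u) ^ 2 * (sinh (r u) ^ 2 * deriv φ u)) := by
  have hsqrt : √2 ^ 2 = 2 := sq_sqrt zero_le_two
  simp only [godelP]
  field_simp
  linear_combination -(cosh (r u) ^ 2 * sinh (r u) ^ 2 * deriv φ u) * hsqrt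

-- Bracketed to match the product-rule chain in `hasDerivAt_godelC1`.
lemma godelC1_eq (u : ℝ) :
    godelC1 t r φ u = -(2 * √2) * (cos (φ u) * (sinh (r u) * (cosh (r u) * deriv t u)))
      + sin (φ u) * deriv r u
      - cos (φ u) * ((2 * cosh (r u) ^ 2 - 3) * (sinh (r u) * (cosh (r u) * deriv φ u))) := by
  simp only [godelC1, sinh_two_mul, cosh_two_mul, cosh_sq]
  ring

lemma godelC2_eq_godelC1_add_pi_div_two (u : ℝ) :
    godelC2 t r φ u = godelC1 t r (fun v => φ v + π / 2) u := by
  simp only [godelC1, godelC2, deriv_add_const, cos_add_pi_div_two, sin_add_pi_div_two]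
  ring

end ConservedQuantities

lemma eq_of_forall_hasDerivAt_zero {f : ℝ → ℝ} (hf : ∀ u, HasDerivAt f 0 u) (x y : ℝ) :
    f x = f y :=
  is_const_of_deriv_eq_zero (fun u => (hf u).differentiableAt) (fun u => (hf u).deriv) x y

section Conservation

variable {t r φ z : ℝ → ℝ} (ht : TwiceDiff t) (hr : TwiceDiff r) (hφ : TwiceDiff φ)
  (hgeo : GodelGeodesicEqns t r φ z)
include ht hr hφ hgeo

lemma hasDerivAt_godelP_two_zero (u : ℝ) : HasDerivAt (godelP t r φ 2 0) 0 u := by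
  have hch := (hr.1 u).hasDerivAt.cosh
  have hsh := (hr.1 u).hasDerivAt.sinh
  have hsqrt : √2 ^ 2 = 2 := sq_sqrt zero_le_two
  have e1 := hgeo.cosh_mul_eqn_t u
  obtain ⟨-, -, e3, -⟩ := hgeo u
  rw [funext godelP_two_zero_eq]
  refine (((hch.pow 2).mul (ht.2 u).hasDerivAt).add
    (((hch.pow 2).mul ((hsh.pow 2).mul (hφ.2 u).hasDerivAt)).const_mul (√2 / 2))).congr_deriv ?_
  simp only [Pi.pow_apply, Pi.mul_apply]
  linear_combination cosh (r u) * e1 + (sinh (r u) * cosh (r u) * √2 / 2) * e3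
    + (sinh (r u) * cosh (r u) * deriv t u * deriv r u) * hsqrt
    + (sinh (r u) * cosh (r u) * √2 * deriv r u * deriv φ u) * cosh_sq (r u)

lemma hasDerivAt_godelC1 (u : ℝ) : HasDerivAt (godelC1 t r φ) 0 u := by
  have hch := (hr.1 u).hasDerivAt.cosh
  have hsh := (hr.1 u).hasDerivAt.sinh
  have hsin := (hφ.1 u).hasDerivAt.sin
  have hcos := (hφ.1 u).hasDerivAt.cos
  have hsqrt : √2 ^ 2 = 2 := sq_sqrt zero_le_two
  have e1 := hgeo.cosh_mul_eqn_t u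
  obtain ⟨-, e2, e3, -⟩ := hgeo u
  rw [funext godelC1_eq]
  refine ((((hcos.mul (hsh.mul (hch.mul (ht.2 u).hasDerivAt))).const_mul (-(2 * √2))).add
      (hsin.mul (hr.2 u).hasDerivAt)).sub
    (hcos.mul ((((hch.pow 2).const_mul 2).sub_const 3).mul
      (hsh.mul (hch.mul (hφ.2 u).hasDerivAt))))).congr_deriv ?_
  simp only [Pi.pow_apply, Pi.mul_apply]
  linear_combination -2 * sinh (r u) * √2 * cos (φ u) * e1 + sin (φ u) * e2
    + (3 - 2 * cosh (r u) ^ 2) * cos (φ u) * e3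
    + (4 * sinh (r u) ^ 4 * cos (φ u) * deriv r u * deriv φ u) * hsqrt
    + (5 * cos (φ u) * deriv r u * deriv φ u
        - 6 * √2 * cos (φ u) * deriv t u * deriv r u
        - 2 * cosh (r u) ^ 2 * cos (φ u) * deriv r u * deriv φ u
        - 8 * sinh (r u) ^ 2 * cos (φ u) * deriv r u * deriv φ u) * cosh_sq (r u)

lemma hasDerivAt_godelC2 (u : ℝ) : HasDerivAt (godelC2 t r φ) 0 u := by
  rw [funext godelC2_eq_godelC1_add_pi_div_two]
  exact hasDerivAt_godelC1 ht hr (hφ.add_const _) (hgeo.add_const_angle _) u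

end Conservation

section Pointwise

variable {t r φ : ℝ → ℝ}

lemma godelC2_mul_sin_sub_godelC1_mul_cos (u : ℝ) :
    godelC2 t r φ u * sin (φ u) - godelC1 t r φ u * cos (φ u)
      = 2 * √2 * sinh (r u) * cosh (r u) * deriv t u
        + (2 * cosh (r u) ^ 2 - 3) * sinh (r u) * cosh (r u) * deriv φ u := by
  simp only [godelC1, godelC2, sinh_two_mul, cosh_two_mul]
  linear_combination (2 * √2 * sinh (r u) * cosh (r u) * deriv t u
      + (cosh (r u) ^ 2 + sinh (r u) ^ 2 - 2) * sinh (r u) * cosh (r u) * deriv φ u)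
        * sin_sq_add_cos_sq (φ u)
    - (sinh (r u) * cosh (r u) * deriv φ u) * cosh_sq (r u)

lemma sinh_mul_cosh_sq_mul_deriv_eq (u : ℝ) :
    sinh (r u) * cosh (r u) ^ 2 * deriv φ u
      = 2 * √2 * sinh (r u) * godelP t r φ 2 0 u
        - cosh (r u) * (godelC2 t r φ u * sin (φ u) - godelC1 t r φ u * cos (φ u)) := by
  have hsqrt : √2 ^ 2 = 2 := sq_sqrt zero_le_two
  rw [godelP_two_zero_eq, godelC2_mul_sin_sub_godelC1_mul_cos]
  linear_combination -(sinh (r u) ^ 3 * cosh (r u) ^ 2 * deriv φ u) * hsqrt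
    + (2 * sinh (r u) * cosh (r u) ^ 2 * deriv φ u) * cosh_sq (r u)

end Pointwise

lemma abs_mul_sin_sub_mul_cos_le (a b θ : ℝ) : |b * sin θ - a * cos θ| ≤ √(a ^ 2 + b ^ 2) := by
  rw [← sqrt_sq_eq_abs]
  gcongr
  nlinarith [sq_nonneg (a * sin θ + b * cos θ), sin_sq_add_cos_sq θ]

lemma abs_le_of_mul_eq_sub {s c K x A q R : ℝ} (hs : 0 < s) (hc : 0 < c) (hK : 0 ≤ K)
    (hq : |q| ≤ R) (h : s * c ^ 2 * x = K * s * A - c * q) :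
    |x| ≤ R / (s * c) + |A| * K / c ^ 2 := by
  have hsc : 0 < s * c ^ 2 := by positivity
  have hx : x = (K * s * A - c * q) / (s * c ^ 2) := by
    rw [eq_div_iff hsc.ne']
    linear_combination h
  calc |x| = |K * s * A - c * q| / (s * c ^ 2) := by rw [hx, abs_div, abs_of_pos hsc]
    _ ≤ (K * s * |A| + c * R) / (s * c ^ 2) := by
        gcongr
        calc |K * s * A - c * q| ≤ |K * s * A| + |c * q| := abs_sub _ _
          _ = K * s * |A| + c * |q| := by
              rw [abs_mul, abs_mul, abs_mul, abs_of_nonneg hK, abs_of_pos hs, abs_of_pos hc]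
          _ ≤ K * s * |A| + c * R := by gcongr
    _ = R / (s * c) + |A| * K / c ^ 2 := by
        field_simp
        ring

theorem godel_phidot_bounded_general (t r φ z : ℝ → ℝ)
    (ht : TwiceDiff t) (hr : TwiceDiff r) (hφ : TwiceDiff φ)
    (hrpos : ∀ u, 0 < r u)
    (hgeo : GodelGeodesicEqns t r φ z)
    (u₀ : ℝ) (c₁ c₂ A : ℝ)
    (hc₁ : c₁ = godelC1 t r φ u₀) (hc₂ : c₂ = godelC2 t r φ u₀)
    (hA : A = godelP t r φ 2 0 u₀) :
    ∀ u : ℝ, |deriv φ u|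
      ≤ 2 * Real.sqrt (c₁ ^ 2 + c₂ ^ 2) / Real.sinh (2 * r u)
        + |A| * (2 * Real.sqrt 2) / Real.cosh (r u) ^ 2 := by
  intro u
  have hc₁u : c₁ = godelC1 t r φ u :=
    hc₁.trans (eq_of_forall_hasDerivAt_zero (hasDerivAt_godelC1 ht hr hφ hgeo) u₀ u)
  have hc₂u : c₂ = godelC2 t r φ u :=
    hc₂.trans (eq_of_forall_hasDerivAt_zero (hasDerivAt_godelC2 ht hr hφ hgeo) u₀ u)
  have hAu : A = godelP t r φ 2 0 u :=
    hA.trans (eq_of_forall_hasDerivAt_zero (hasDerivAt_godelP_two_zero ht hr hφ hgeo) u₀ u)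
  rw [sinh_two_mul, mul_assoc, mul_div_mul_left _ _ two_ne_zero, hc₁u, hc₂u, hAu]
  exact abs_le_of_mul_eq_sub (sinh_pos_iff.2 (hrpos u)) (cosh_pos _) (by positivity)
    (abs_mul_sin_sub_mul_cos_le _ _ _) (sinh_mul_cosh_sq_mul_deriv_eq u)

/-- Along a geodesic, the angular velocity is bounded:
`|φ'| ≤ 2√(c₁² + c₂²)/sinh(2r) + |A|·2√2/cosh(r)²`. -/
theorem godel_phidot_bounded (t r φ z : ℝ → ℝ)
    (ht : TwiceDiff t) (hr : TwiceDiff r) (hφ : TwiceDiff φ) (hz : TwiceDiff z)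
    (hrpos : ∀ u, 0 < r u)
    (hgeo : GodelGeodesicEqns t r φ z)
    (u₀ : ℝ) (c₁ c₂ A : ℝ)
    (hc₁ : c₁ = godelC1 t r φ u₀) (hc₂ : c₂ = godelC2 t r φ u₀)
    (hA : A = godelP t r φ 2 0 u₀) :
    ∀ u : ℝ, |deriv φ u|
      ≤ 2 * Real.sqrt (c₁ ^ 2 + c₂ ^ 2) / Real.sinh (2 * r u)
        + |A| * (2 * Real.sqrt 2) / Real.cosh (r u) ^ 2 :=
  godel_phidot_bounded_general t r φ z ht hr hφ hrpos hgeo u₀ c₁ c₂ A hc₁ hc₂ hA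
end

section
/- Let t, r, φ, z : ℝ → ℝ be a geodesic of Gödel's universe, fix u₀ ∈ ℝ, and set c₁ = C₁(u₀), c₂ = C₂(u₀), A = P_{2,0}(u₀), B = P_{0,1}(u₀). Then at every u ∈ ℝ where r'(u) ≠ 0, the radial coordinate as a function of the angle satisfies dr/dφ = r'(u)/φ'(u) = (c₁·sin(φ(u)) + c₂·cos(φ(u))) / ((√2/sinh(r(u))²)·(B − A/cosh(r(u))²)), provided φ'(u) ≠ 0. -/
/-!
Along a geodesic the pair `(r', X)`, where
`X = √2 sinh (2r) t' + (cosh (2r) - 2) sinh (2r) φ' / 2`, obeys `r'' = -φ' X` and `X' = φ' r'`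
(the second and the first with third geodesic equations): it rotates with the angle `φ`.
Hence `C₂ - i C₁ = e^{-iφ} (r' + i X)` is conserved; so is every `P_{ρ₁,ρ₂}`, by a direct
computation from the first and third equations. Pointwise, `C₁ sin φ + C₂ cos φ = r'` and
`√2 / sinh² r · (P_{0,1} - P_{2,0} / cosh² r) = φ'`, so the constants may be evaluated at `u`
instead of `u₀`.
-/

open Real

lemma eq_of_hasDerivAt_zero {f : ℝ → ℝ} (hf : ∀ x, HasDerivAt f 0 x) (x y : ℝ) :
    f x = f y :=
  is_const_of_deriv_eq_zero (fun x => (hf x).differentiableAt) (fun x => (hf x).deriv) x y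

section Rotation

variable {θ p q : ℝ → ℝ} {θ' x : ℝ}

lemma hasDerivAt_sin_mul_sub_cos_mul (hθ : HasDerivAt θ θ' x)
    (hp : HasDerivAt p (-(θ' * q x)) x) (hq : HasDerivAt q (θ' * p x) x) :
    HasDerivAt (fun y => sin (θ y) * p y - cos (θ y) * q y) 0 x :=
  ((hθ.sin.mul hp).sub (hθ.cos.mul hq)).congr_deriv (by ring)

lemma hasDerivAt_cos_mul_add_sin_mul (hθ : HasDerivAt θ θ' x)
    (hp : HasDerivAt p (-(θ' * q x)) x) (hq : HasDerivAt q (θ' * p x) x) :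
    HasDerivAt (fun y => cos (θ y) * p y + sin (θ y) * q y) 0 x :=
  ((hθ.cos.mul hp).add (hθ.sin.mul hq)).congr_deriv (by ring)

end Rotation

noncomputable def godelX (t r φ : ℝ → ℝ) (u : ℝ) : ℝ :=
  √2 * sinh (2 * r u) * deriv t u + (cosh (2 * r u) - 2) * sinh (2 * r u) / 2 * deriv φ u

section Algebra

variable (t r φ : ℝ → ℝ)

lemma godelC1_eq_sin_mul_sub_cos_mul :
    godelC1 t r φ = fun u => sin (φ u) * deriv r u - cos (φ u) * godelX t r φ u := by
  ext u
  simp only [godelC1, godelX]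
  ring

lemma godelC2_eq_cos_mul_add_sin_mul :
    godelC2 t r φ = fun u => cos (φ u) * deriv r u + sin (φ u) * godelX t r φ u := by
  ext u
  simp only [godelC2, godelX]
  ring

lemma godelC1_mul_sin_add_godelC2_mul_cos (u : ℝ) :
    godelC1 t r φ u * sin (φ u) + godelC2 t r φ u * cos (φ u) = deriv r u := by
  rw [godelC1_eq_sin_mul_sub_cos_mul, godelC2_eq_cos_mul_add_sin_mul]
  linear_combination deriv r u * sin_sq_add_cos_sq (φ u)

lemma sqrt_two_div_sinh_sq_mul_godelP_sub {u : ℝ} (hr : r u ≠ 0) :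
    √2 / sinh (r u) ^ 2 * (godelP t r φ 0 1 u - godelP t r φ 2 0 u / cosh (r u) ^ 2)
      = deriv φ u := by
  have hs : sinh (r u) ≠ 0 := sinh_ne_zero.mpr hr
  have hc : cosh (r u) ≠ 0 := (cosh_pos (r u)).ne'
  simp only [godelP]
  field_simp
  ring

end Algebra

namespace GodelGeodesicEqns

variable {t r φ z : ℝ → ℝ}

lemma cosh_mul_deriv_deriv_t (hgeo : GodelGeodesicEqns t r φ z) (u : ℝ) :
    cosh (r u) * deriv (deriv t) u + 4 * sinh (r u) * deriv t u * deriv r u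
      + 2 * √2 * sinh (r u) ^ 3 * deriv φ u * deriv r u = 0 := by
  have h := (hgeo u).1
  rw [tanh_eq_sinh_div_cosh] at h
  have hc : cosh (r u) ≠ 0 := (cosh_pos (r u)).ne'
  field_simp at h
  linear_combination h

lemma deriv_deriv_r (hgeo : GodelGeodesicEqns t r φ z) (u : ℝ) :
    deriv (deriv r) u = -(deriv φ u * godelX t r φ u) := by
  rw [godelX, sinh_two_mul, cosh_two_mul]
  linear_combination (hgeo u).2.1 - (sinh (r u) * cosh (r u) * deriv φ u ^ 2) * cosh_sq (r u)

lemma hasDerivAt_deriv_r (hgeo : GodelGeodesicEqns t r φ z) (hr : Differentiable ℝ (deriv r))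
    (u : ℝ) : HasDerivAt (deriv r) (-(deriv φ u * godelX t r φ u)) u :=
  hgeo.deriv_deriv_r u ▸ (hr u).hasDerivAt

lemma hasDerivAt_godelX (hgeo : GodelGeodesicEqns t r φ z) (ht : Differentiable ℝ (deriv t))
    (hr : Differentiable ℝ r) (hφ : Differentiable ℝ (deriv φ)) (u : ℝ) :
    HasDerivAt (godelX t r φ) (deriv φ u * deriv r u) u := by
  have h2r : HasDerivAt (fun x => 2 * r x) (2 * deriv r u) u := (hr u).hasDerivAt.const_mul 2
  have H := ((h2r.sinh.const_mul √2).mul (ht u).hasDerivAt).add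
    ((((h2r.cosh.sub_const 2).mul h2r.sinh).div_const 2).mul (hφ u).hasDerivAt)
  refine H.congr_deriv ?_
  simp only [Pi.mul_apply]
  rw [sinh_two_mul, cosh_two_mul]
  have h2 : √2 ^ 2 = 2 := sq_sqrt zero_le_two
  linear_combination (2 * √2 * sinh (r u)) * cosh_mul_deriv_deriv_t hgeo u
    + (cosh (r u) ^ 2 + sinh (r u) ^ 2 - 2) * (hgeo u).2.2.1
    + (4 * √2 * deriv t u + (cosh (r u) ^ 2 + 7 * sinh (r u) ^ 2 - 3) * deriv φ u)
      * deriv r u * cosh_sq (r u)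
    - 4 * sinh (r u) ^ 4 * deriv φ u * deriv r u * h2

lemma hasDerivAt_godelP (hgeo : GodelGeodesicEqns t r φ z) (ht : Differentiable ℝ (deriv t))
    (hr : Differentiable ℝ r) (hφ : Differentiable ℝ (deriv φ)) (ρ₁ ρ₂ u : ℝ) :
    HasDerivAt (godelP t r φ ρ₁ ρ₂) 0 u := by
  have hR := (hr u).hasDerivAt
  have hρ₁cosh := (hR.cosh.pow 2).const_mul ρ₁
  have H := ((hρ₁cosh.div_const 2).const_add ρ₂ |>.mul (ht u).hasDerivAt).add
    ((hρ₁cosh.add_const (4 * ρ₂)).mul (hR.sinh.pow 2) |>.div_const (2 * √2)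
      |>.mul (hφ u).hasDerivAt)
  refine H.congr_deriv ?_
  simp only [Pi.mul_apply, Pi.pow_apply, Nat.cast_ofNat, Nat.add_one_sub_one, pow_one]
  field_simp
  apply mul_left_cancel₀ (cosh_pos (r u)).ne'
  have h2 : √2 ^ 2 = 2 := sq_sqrt zero_le_two
  linear_combination √2 * (2 * ρ₂ + ρ₁ * cosh (r u) ^ 2) * cosh_mul_deriv_deriv_t hgeo u
    + sinh (r u) * (ρ₁ * cosh (r u) ^ 2 + 4 * ρ₂) * (hgeo u).2.2.1
    + 2 * sinh (r u) * (ρ₁ * cosh (r u) ^ 2 + 4 * ρ₂) * deriv r u * deriv φ u * cosh_sq (r u)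
    - 2 * (2 * ρ₂ + ρ₁ * cosh (r u) ^ 2) * sinh (r u) ^ 3 * deriv r u * deriv φ u * h2

lemma godelC1_eq (hgeo : GodelGeodesicEqns t r φ z) (ht : Differentiable ℝ (deriv t))
    (hr : TwiceDiff r) (hφ : TwiceDiff φ) (u v : ℝ) : godelC1 t r φ u = godelC1 t r φ v := by
  rw [godelC1_eq_sin_mul_sub_cos_mul]
  exact eq_of_hasDerivAt_zero (fun x => hasDerivAt_sin_mul_sub_cos_mul (hφ.1 x).hasDerivAt
    (hgeo.hasDerivAt_deriv_r hr.2 x) (hgeo.hasDerivAt_godelX ht hr.1 hφ.2 x)) u v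

lemma godelC2_eq (hgeo : GodelGeodesicEqns t r φ z) (ht : Differentiable ℝ (deriv t))
    (hr : TwiceDiff r) (hφ : TwiceDiff φ) (u v : ℝ) : godelC2 t r φ u = godelC2 t r φ v := by
  rw [godelC2_eq_cos_mul_add_sin_mul]
  exact eq_of_hasDerivAt_zero (fun x => hasDerivAt_cos_mul_add_sin_mul (hφ.1 x).hasDerivAt
    (hgeo.hasDerivAt_deriv_r hr.2 x) (hgeo.hasDerivAt_godelX ht hr.1 hφ.2 x)) u v

lemma godelP_eq (hgeo : GodelGeodesicEqns t r φ z) (ht : Differentiable ℝ (deriv t))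
    (hr : Differentiable ℝ r) (hφ : Differentiable ℝ (deriv φ)) (ρ₁ ρ₂ u v : ℝ) :
    godelP t r φ ρ₁ ρ₂ u = godelP t r φ ρ₁ ρ₂ v :=
  eq_of_hasDerivAt_zero (hgeo.hasDerivAt_godelP ht hr hφ ρ₁ ρ₂) u v

end GodelGeodesicEqns

theorem godel_dr_dphi_general (t r φ z : ℝ → ℝ)
    (ht : TwiceDiff t) (hr : TwiceDiff r) (hφ : TwiceDiff φ)
    (hrpos : ∀ u, 0 < r u)
    (hgeo : GodelGeodesicEqns t r φ z)
    (u₀ : ℝ) (c₁ c₂ A B : ℝ)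
    (hc₁ : c₁ = godelC1 t r φ u₀) (hc₂ : c₂ = godelC2 t r φ u₀)
    (hA : A = godelP t r φ 2 0 u₀) (hB : B = godelP t r φ 0 1 u₀) :
    ∀ u : ℝ, deriv r u ≠ 0 → deriv φ u ≠ 0 →
      deriv r u / deriv φ u
        = (c₁ * Real.sin (φ u) + c₂ * Real.cos (φ u))
            / (Real.sqrt 2 / Real.sinh (r u) ^ 2 * (B - A / Real.cosh (r u) ^ 2)) := by
  intro u _ _
  rw [hc₁, hc₂, hA, hB, ← hgeo.godelC1_eq ht.2 hr hφ u, ← hgeo.godelC2_eq ht.2 hr hφ u,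
    ← hgeo.godelP_eq ht.2 hr.1 hφ.2 2 0 u, ← hgeo.godelP_eq ht.2 hr.1 hφ.2 0 1 u,
    godelC1_mul_sin_add_godelC2_mul_cos, sqrt_two_div_sinh_sq_mul_godelP_sub t r φ (hrpos u).ne']

/-- Along a geodesic, wherever `r' ≠ 0` and `φ' ≠ 0`, the ratio
`dr/dφ = r'/φ'` equals the quotient of the conserved-quantity expressions. -/
theorem godel_dr_dphi (t r φ z : ℝ → ℝ)
    (ht : TwiceDiff t) (hr : TwiceDiff r) (hφ : TwiceDiff φ) (hz : TwiceDiff z)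
    (hrpos : ∀ u, 0 < r u)
    (hgeo : GodelGeodesicEqns t r φ z)
    (u₀ : ℝ) (c₁ c₂ A B : ℝ)
    (hc₁ : c₁ = godelC1 t r φ u₀) (hc₂ : c₂ = godelC2 t r φ u₀)
    (hA : A = godelP t r φ 2 0 u₀) (hB : B = godelP t r φ 0 1 u₀) :
    ∀ u : ℝ, deriv r u ≠ 0 → deriv φ u ≠ 0 →
      deriv r u / deriv φ u
        = (c₁ * Real.sin (φ u) + c₂ * Real.cos (φ u))
            / (Real.sqrt 2 / Real.sinh (r u) ^ 2 * (B - A / Real.cosh (r u) ^ 2)) :=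
  godel_dr_dphi_general t r φ z ht hr hφ hrpos hgeo u₀ c₁ c₂ A B hc₁ hc₂ hA hB
end
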